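/- Let 0 < γ < π/4 and let L* be a d-subspace of ℝ^D with d ≥ 1. Let the dataset consist of N_in nonzero inliers lying in L* and N_out nonzero outliers in ℝ^D; let X̃_in and X̃_out be the D × N_in and D × N_out matrices whose columns are the inliers and outliers normalized to unit Euclidean norm, and suppose (sin(γ)/√2) · λ_d(X̃_in X̃_inᵀ) − ‖X̃_out‖₂² > 0. Let A = X̃_in X̃_inᵀ + X̃_out X̃_outᵀ and let L_SPCA be the span of d orthonormal eigenvectors of A corresponding to its d largest eigenvalues. Then the largest principal angle between L_SPCA and L* is at most γ; equivalently, ‖P_{L_SPCA} − P_{L*}‖₂ ≤ sin(γ), where P_L denotes the orthogonal projection onto L. -/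

import Mathlib

/-!
Write `A = S + N` with `S = X̃_in X̃_inᵀ` and `N = X̃_out X̃_outᵀ ⪰ 0`, and let `ρ = λ_d(S)`.
The range of `S` lies in `L*`, which is therefore spanned by the top `d` eigenvectors of `S`,
so `⟪z, A z⟫ ≥ ⟪z, S z⟫ ≥ ρ ‖z‖²` on `L*`; by min–max, `λ_d(A) ≥ ρ`. Hence every
`v ∈ L_SPCA` is `A w` with `ρ ‖w‖ ≤ ‖v‖`, and since `S w ∈ L*` its distance to `L*` is at most
`‖N w‖ ≤ ‖X̃_out‖₂² ‖w‖`: `‖v - P_{L*} v‖ ≤ c ‖v‖` with `c = ‖X̃_out‖₂² / ρ`. For two subspaces of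
the same dimension this one-sided estimate yields `‖P_{L_SPCA} - P_{L*}‖ ≤ c / √(1 - c²)`, and the
hypothesis `c < sin γ / √2` makes this at most `sin γ`.
-/

open Module

/-- The spectral (operator `ℓ² → ℓ²`) norm of a matrix. -/
noncomputable def specNorm {m n : ℕ} (A : Matrix (Fin m) (Fin n) ℝ) : ℝ :=
  ‖LinearMap.toContinuousLinearMap (Matrix.toEuclideanLin A)‖

/-- The orthogonal projection onto a subspace `L` of `ℝ^D`, as a map `ℝ^D → ℝ^D`. -/
noncomputable def projCLM {D : ℕ} (L : Submodule ℝ (EuclideanSpace ℝ (Fin D))) :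
    EuclideanSpace ℝ (Fin D) →L[ℝ] EuclideanSpace ℝ (Fin D) :=
  L.subtypeL.comp (L.orthogonalProjectionOnto)

open Submodule
open scoped Matrix RealInnerProductSpace

namespace Matrix

variable {m n : Type*} [Fintype n] [DecidableEq n]

theorem toEuclideanLin_apply_mem {K : Submodule ℝ (EuclideanSpace ℝ m)} {A : Matrix m n ℝ}
    (hA : ∀ j, WithLp.toLp 2 (Aᵀ j) ∈ K) (y : EuclideanSpace ℝ n) : toEuclideanLin A y ∈ K := by
  have : toEuclideanLin A y = ∑ j, y j • WithLp.toLp 2 (Aᵀ j) := by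
    ext i
    simp [toLpLin_apply, mulVec, dotProduct, mul_comm]
  rw [this]
  exact sum_mem fun j _ => smul_mem _ _ (hA j)

variable [Fintype m] [DecidableEq m]

theorem toEuclideanLin_mul_transpose (A : Matrix m n ℝ) :
    toEuclideanLin (A * Aᵀ) = toEuclideanLin A ∘ₗ (toEuclideanLin A).adjoint := by
  rw [← toEuclideanLin_conjTranspose_eq_adjoint, conjTranspose_eq_transpose_of_trivial]
  ext x : 1
  simp [toLpLin_apply, mulVec_mulVec]

theorem inner_toEuclideanLin_mul_transpose_self_nonneg (A : Matrix m n ℝ)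
    (x : EuclideanSpace ℝ m) : 0 ≤ ⟪x, toEuclideanLin (A * Aᵀ) x⟫ := by
  rw [toEuclideanLin_mul_transpose]
  exact (LinearMap.isPositive_self_comp_adjoint _).inner_nonneg_right x

theorem norm_toEuclideanLin_mul_transpose_apply_le {p q : ℕ} (A : Matrix (Fin p) (Fin q) ℝ)
    (x : EuclideanSpace ℝ (Fin p)) : ‖toEuclideanLin (A * Aᵀ) x‖ ≤ specNorm A ^ 2 * ‖x‖ := by
  set F := LinearMap.toContinuousLinearMap (toEuclideanLin A)
  have hF : toEuclideanLin (A * Aᵀ) x = F (ContinuousLinearMap.adjoint F x) := by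
    rw [toEuclideanLin_mul_transpose]; rfl
  calc ‖toEuclideanLin (A * Aᵀ) x‖ ≤ ‖F‖ * (‖ContinuousLinearMap.adjoint F‖ * ‖x‖) := by
        rw [hF]; exact F.le_opNorm_of_le ((ContinuousLinearMap.adjoint F).le_opNorm x)
    _ = specNorm A ^ 2 * ‖x‖ := by
        rw [LinearIsometryEquiv.norm_map, specNorm]; ring

end Matrix

namespace Submodule

variable {E : Type*} [NormedAddCommGroup E] [InnerProductSpace ℝ E] {U K : Submodule ℝ E}
  {c : ℝ}

theorem norm_sub_starProjection_le_norm_sub [K.HasOrthogonalProjection] (y : E) {x : E}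
    (hx : x ∈ K) : ‖y - K.starProjection y‖ ≤ ‖y - x‖ := by
  rw [starProjection_minimal]
  exact ciInf_le ⟨0, by rintro _ ⟨_, rfl⟩; exact norm_nonneg _⟩ (⟨x, hx⟩ : K)

theorem norm_sq_eq_norm_starProjection_sq_add (K : Submodule ℝ E) [K.HasOrthogonalProjection]
    (x : E) : ‖x‖ ^ 2 = ‖K.starProjection x‖ ^ 2 + ‖x - K.starProjection x‖ ^ 2 := by
  simpa [starProjection_orthogonal'] using norm_sq_eq_add_norm_sq_starProjection x K

theorem norm_starProjection_le_of_mem_orthogonal [U.HasOrthogonalProjection]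
    [K.HasOrthogonalProjection] (hc : 0 ≤ c)
    (h : ∀ v ∈ U, ‖v - K.starProjection v‖ ≤ c * ‖v‖) {u : E} (hu : u ∈ Kᗮ) :
    ‖U.starProjection u‖ ≤ c * ‖u‖ := by
  set p := U.starProjection u
  have hp : ‖p‖ ^ 2 ≤ c * ‖u‖ * ‖p‖ := calc
    ‖p‖ ^ 2 = ⟪p - K.starProjection p, u⟫ := by
      have hup : ⟪u - p, p⟫ = 0 :=
        starProjection_inner_eq_zero u p (starProjection_apply_mem U u)
      have hKp : ⟪K.starProjection p, u⟫ = 0 :=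
        inner_right_of_mem_orthogonal (starProjection_apply_mem K p) hu
      rw [inner_sub_left, real_inner_comm p u] at hup
      rw [inner_sub_left, hKp, sub_zero, ← real_inner_self_eq_norm_sq]
      linarith
    _ ≤ ‖p - K.starProjection p‖ * ‖u‖ := real_inner_le_norm _ _
    _ ≤ c * ‖p‖ * ‖u‖ := by gcongr; exact h p (starProjection_apply_mem U u)
    _ = c * ‖u‖ * ‖p‖ := by ring
  rcases (norm_nonneg p).eq_or_lt with hp0 | hp0
  · rw [← hp0]; positivity
  · exact le_of_mul_le_mul_right (by linarith) hp0

theorem exists_mem_starProjection_eq [FiniteDimensional ℝ U] [FiniteDimensional ℝ K]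
    (hdim : finrank ℝ U = finrank ℝ K) (hc : c < 1)
    (h : ∀ v ∈ U, ‖v - K.starProjection v‖ ≤ c * ‖v‖) {w : E} (hw : w ∈ K) :
    ∃ x ∈ U, K.starProjection x = w := by
  let f : U →ₗ[ℝ] K := K.orthogonalProjectionOnto.toLinearMap ∘ₗ U.subtype
  have hf : Function.Injective f := by
    rw [← LinearMap.ker_eq_bot, eq_bot_iff]
    rintro ⟨x, hx⟩ hfx
    have hPx : K.starProjection x = 0 := by
      simp [starProjection_apply, show K.orthogonalProjectionOnto x = 0 from hfx]
    have := h x hx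
    rw [hPx, sub_zero] at this
    simpa using (show ‖x‖ = 0 by nlinarith [norm_nonneg x])
  obtain ⟨⟨x, hx⟩, hfx⟩ := (LinearMap.injective_iff_surjective_of_finrank_eq_finrank hdim).1 hf
    ⟨w, hw⟩
  exact ⟨x, hx, congrArg Subtype.val hfx⟩

theorem sq_norm_sub_starProjection_le_of_mem [FiniteDimensional ℝ U] [FiniteDimensional ℝ K]
    (hdim : finrank ℝ U = finrank ℝ K) (hc0 : 0 ≤ c) (hc1 : c < 1)
    (h : ∀ v ∈ U, ‖v - K.starProjection v‖ ≤ c * ‖v‖) {w : E} (hw : w ∈ K) :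
    (1 - c ^ 2) * ‖w - U.starProjection w‖ ^ 2 ≤ c ^ 2 * ‖w‖ ^ 2 := by
  obtain ⟨x, hxU, rfl⟩ := exists_mem_starProjection_eq hdim hc1 h hw
  have hx := h x hxU
  have hw' : ‖K.starProjection x - U.starProjection (K.starProjection x)‖ ≤ c * ‖x‖ :=
    (norm_sub_starProjection_le_norm_sub _ hxU).trans (by rwa [norm_sub_rev])
  have hpyth := K.norm_sq_eq_norm_starProjection_sq_add x
  have h1 : (1 - c ^ 2) * ‖x‖ ^ 2 ≤ ‖K.starProjection x‖ ^ 2 := by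
    nlinarith [norm_nonneg (x - K.starProjection x), mul_le_mul_of_nonneg_left hx hc0]
  have h2 : ‖K.starProjection x - U.starProjection (K.starProjection x)‖ ^ 2 ≤ c ^ 2 * ‖x‖ ^ 2 := by
    rw [← mul_pow]; exact pow_le_pow_left₀ (norm_nonneg _) hw' 2
  nlinarith [mul_le_mul_of_nonneg_left h2 (by nlinarith : 0 ≤ 1 - c ^ 2),
    mul_le_mul_of_nonneg_left h1 (sq_nonneg c)]

theorem norm_starProjection_sub_le [FiniteDimensional ℝ U] [FiniteDimensional ℝ K]
    (hdim : finrank ℝ U = finrank ℝ K) (hc0 : 0 ≤ c) (hc1 : c < 1)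
    (h : ∀ v ∈ U, ‖v - K.starProjection v‖ ≤ c * ‖v‖) :
    ‖U.starProjection - K.starProjection‖ ≤ c / √(1 - c ^ 2) := by
  have hc2 : 0 < 1 - c ^ 2 := by nlinarith
  refine ContinuousLinearMap.opNorm_le_bound _ (by positivity) fun x => ?_
  set q := K.starProjection x
  set u := x - q
  have hdecomp : (U.starProjection - K.starProjection) x
      = U.starProjection u - (q - U.starProjection q) := by
    simp only [sub_apply, u, map_sub]; abel
  have horth : ⟪U.starProjection u, q - U.starProjection q⟫ = 0 :=
    inner_right_of_mem_orthogonal (starProjection_apply_mem U u)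
      (sub_starProjection_mem_orthogonal q)
  have hu : ‖U.starProjection u‖ ≤ c * ‖u‖ :=
    norm_starProjection_le_of_mem_orthogonal hc0 h (sub_starProjection_mem_orthogonal x)
  have hq := sq_norm_sub_starProjection_le_of_mem hdim hc0 hc1 h (starProjection_apply_mem K x)
  have hx := K.norm_sq_eq_norm_starProjection_sq_add x
  have hsq : ‖(U.starProjection - K.starProjection) x‖ ^ 2 * (1 - c ^ 2) ≤ (c * ‖x‖) ^ 2 := by
    rw [hdecomp, norm_sub_sq_real, horth]
    nlinarith [pow_le_pow_left₀ (norm_nonneg _) hu 2, sq_nonneg ‖U.starProjection u‖]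
  rw [div_mul_eq_mul_div, le_div_iff₀ (by positivity)]
  refine (sq_le_sq₀ (by positivity) (by positivity)).1 ?_
  rwa [mul_pow, Real.sq_sqrt hc2.le]

end Submodule

namespace OrthonormalBasis

variable {E : Type*} [NormedAddCommGroup E] [InnerProductSpace ℝ E]

section

variable {ι : Type*} [Fintype ι] (b : OrthonormalBasis ι ℝ E) {T : E →ₗ[ℝ] E} {μ : ι → ℝ}

theorem inner_map_self_eq_sum (hT : ∀ i, T (b i) = μ i • b i) (z : E) :
    ⟪z, T z⟫ = ∑ i, μ i * ⟪b i, z⟫ ^ 2 := by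
  nth_rw 2 [← b.sum_repr' z]
  simp only [map_sum, map_smul, hT, smul_smul, inner_sum, real_inner_smul_right,
    real_inner_comm z]
  exact Finset.sum_congr rfl fun i _ => by ring

theorem le_inner_map_self (hT : ∀ i, T (b i) = μ i • b i) {ρ : ℝ} {z : E}
    (h : ∀ i, ⟪b i, z⟫ ≠ 0 → ρ ≤ μ i) :
    ρ * ‖z‖ ^ 2 ≤ ⟪z, T z⟫ := by
  rw [b.inner_map_self_eq_sum hT, ← b.sum_sq_inner_right, Finset.mul_sum]
  refine Finset.sum_le_sum fun i _ => ?_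
  by_cases hi : ⟪b i, z⟫ = 0
  · simp [hi]
  · exact mul_le_mul_of_nonneg_right (h i hi) (sq_nonneg _)

theorem inner_map_self_le (hT : ∀ i, T (b i) = μ i • b i) {ρ : ℝ} {z : E}
    (h : ∀ i, ⟪b i, z⟫ ≠ 0 → μ i ≤ ρ) :
    ⟪z, T z⟫ ≤ ρ * ‖z‖ ^ 2 := by
  rw [b.inner_map_self_eq_sum hT, ← b.sum_sq_inner_right, Finset.mul_sum]
  refine Finset.sum_le_sum fun i _ => ?_
  by_cases hi : ⟪b i, z⟫ = 0
  · simp [hi]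
  · exact mul_le_mul_of_nonneg_right (h i hi) (sq_nonneg _)

theorem exists_map_eq_of_le (hT : ∀ i, T (b i) = μ i • b i) {ρ : ℝ} (hρ : 0 < ρ) {v : E}
    (h : ∀ i, ⟪b i, v⟫ ≠ 0 → ρ ≤ μ i) :
    ∃ w, T w = v ∧ ρ * ‖w‖ ≤ ‖v‖ := by
  set w := b.repr.symm (WithLp.toLp 2 fun i => ⟪b i, v⟫ / μ i)
  have hw : ∀ i, ⟪b i, w⟫ = ⟪b i, v⟫ / μ i := fun i => by simp [w, ← b.repr_apply_apply]
  have hTw : T w = v := by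
    rw [← b.sum_repr' w]
    conv_rhs => rw [← b.sum_repr' v]
    simp only [map_sum, map_smul, hT, smul_smul, hw]
    refine Finset.sum_congr rfl fun i _ => ?_
    by_cases hi : ⟪b i, v⟫ = 0
    · simp [hi]
    · rw [div_mul_cancel₀ _ (hρ.trans_le (h i hi)).ne']
  refine ⟨w, hTw, ?_⟩
  have hw_sq : ρ * ‖w‖ ^ 2 ≤ ‖w‖ * ‖v‖ := calc
    ρ * ‖w‖ ^ 2 ≤ ⟪w, T w⟫ :=
      b.le_inner_map_self hT fun i hi => h i (div_ne_zero_iff.1 (hw i ▸ hi)).1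
    _ = ⟪w, v⟫ := by rw [hTw]
    _ ≤ ‖w‖ * ‖v‖ := real_inner_le_norm w v
  rcases (norm_nonneg w).eq_or_lt with hw0 | hw0
  · rw [← hw0, mul_zero]; exact norm_nonneg v
  · exact le_of_mul_le_mul_left (by linarith) hw0

theorem norm_sub_starProjection_le (hT : ∀ i, T (b i) = μ i • b i) {S N : E →ₗ[ℝ] E}
    (hTSN : T = S + N) {K : Submodule ℝ E} [K.HasOrthogonalProjection] (hSK : ∀ x, S x ∈ K)
    {ε ρ : ℝ} (hε : 0 ≤ ε) (hN : ∀ x, ‖N x‖ ≤ ε * ‖x‖) (hρ : 0 < ρ) {v : E}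
    (hv : ∀ i, ⟪b i, v⟫ ≠ 0 → ρ ≤ μ i) : ‖v - K.starProjection v‖ ≤ ε / ρ * ‖v‖ := by
  obtain ⟨w, rfl, hw⟩ := b.exists_map_eq_of_le hT hρ hv
  calc ‖T w - K.starProjection (T w)‖ ≤ ‖T w - S w‖ :=
        norm_sub_starProjection_le_norm_sub _ (hSK w)
    _ = ‖N w‖ := by rw [hTSN, LinearMap.add_apply, add_sub_cancel_left]
    _ ≤ ε * ‖w‖ := hN w
    _ ≤ ε / ρ * ‖T w‖ := by
        rw [div_mul_eq_mul_div, le_div_iff₀ hρ, mul_assoc, mul_comm ‖w‖]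
        exact mul_le_mul_of_nonneg_left hw hε

end

variable {D : ℕ} (b : OrthonormalBasis (Fin D) ℝ E)

theorem inner_eq_zero_of_mem_span_castLE {d : ℕ} (h : d ≤ D) {z : E}
    (hz : z ∈ span ℝ (Set.range fun j : Fin d => b (Fin.castLE h j))) {i : Fin D}
    (hi : d ≤ (i : ℕ)) : ⟪b i, z⟫ = 0 := by
  refine mem_orthogonal_singleton_iff_inner_right.1 (span_le.2 ?_ hz)
  rintro _ ⟨j, rfl⟩
  refine mem_orthogonal_singleton_iff_inner_right.2 (b.orthonormal.2 fun hij => ?_)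
  have := congrArg Fin.val hij
  simp only [Fin.val_castLE] at this
  omega

theorem finrank_span_castLE {d : ℕ} (h : d ≤ D) :
    finrank ℝ (span ℝ (Set.range fun j : Fin d => b (Fin.castLE h j))) = d :=
  (finrank_span_eq_card (b.orthonormal.comp _ (Fin.castLE_injective h)).linearIndependent).trans
    (Fintype.card_fin d)

theorem le_of_forall_le_inner_map_self {T : E →ₗ[ℝ] E} {μ : Fin D → ℝ}
    (hT : ∀ i, T (b i) = μ i • b i) (hμ : Antitone μ) {K : Submodule ℝ E} {ρ : ℝ}
    (hK : ∀ z ∈ K, ρ * ‖z‖ ^ 2 ≤ ⟪z, T z⟫) {i : Fin D} (hi : (i : ℕ) < finrank ℝ K) :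
    ρ ≤ μ i := by
  have := Module.Finite.of_basis b.toBasis
  -- min–max: some nonzero `z ∈ K` is orthogonal to the eigenvectors `b j`, `j < i`
  let f : K →ₗ[ℝ] (Fin i → ℝ) :=
    LinearMap.pi fun j => (innerₛₗ ℝ (b (Fin.castLE i.isLt.le j))).comp K.subtype
  obtain ⟨z, hzf, hz0⟩ := (Submodule.ne_bot_iff _).1
    (LinearMap.ker_ne_bot_of_finrank_lt (f := f) (by simpa using hi))
  have hz : ∀ j, ⟪b j, z⟫ ≠ 0 → μ j ≤ μ i := fun j hj => hμ <| by
    by_contra! hji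
    exact hj (congrFun hzf ⟨j, hji⟩)
  have hz_pos : 0 < ‖(z : E)‖ ^ 2 := by
    have : (z : E) ≠ 0 := by simpa using hz0
    positivity
  exact le_of_mul_le_mul_right ((hK z z.2).trans (b.inner_map_self_le hT hz)) hz_pos

theorem le_inner_map_self_of_mem {T : E →ₗ[ℝ] E} {μ : Fin D → ℝ}
    (hT : ∀ i, T (b i) = μ i • b i) (hμ : Antitone μ) {K : Submodule ℝ E} (hTK : ∀ x, T x ∈ K)
    {i : Fin D} (hi : (i : ℕ) + 1 = finrank ℝ K) (hμi : 0 < μ i) {z : E} (hz : z ∈ K) :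
    μ i * ‖z‖ ^ 2 ≤ ⟪z, T z⟫ := by
  have := Module.Finite.of_basis b.toBasis
  have hspan : span ℝ (Set.range fun j : Fin (i + 1) => b (Fin.castLE i.isLt j)) = K := by
    refine eq_of_le_of_finrank_eq (span_le.2 ?_) (by rw [b.finrank_span_castLE, hi])
    rintro _ ⟨j, rfl⟩
    have hμj : μ (Fin.castLE i.isLt j) ≠ 0 :=
      (hμi.trans_le (hμ (by rw [Fin.le_def, Fin.val_castLE]; omega))).ne'
    change b _ ∈ K
    rw [← inv_smul_smul₀ hμj (b _), ← hT]
    exact smul_mem _ _ (hTK _)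
  refine b.le_inner_map_self hT fun j hj => hμ ?_
  by_contra! hij
  exact hj (b.inner_eq_zero_of_mem_span_castLE _ (hspan ▸ hz) (Fin.lt_def.1 hij))

end OrthonormalBasis

theorem div_sqrt_one_sub_sq_le {c s : ℝ} (hc : 0 ≤ c) (hcs : c < s / √2) (hs : s ≤ 1) :
    c / √(1 - c ^ 2) ≤ s := by
  have hc2 : c ^ 2 < s ^ 2 / 2 := by
    have := pow_lt_pow_left₀ hcs hc two_ne_zero
    rwa [div_pow, Real.sq_sqrt zero_le_two] at this
  have hs0 : 0 < s := (div_pos_iff_of_pos_right (Real.sqrt_pos.2 two_pos)).1 (hc.trans_lt hcs)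
  have hs2 : s ^ 2 ≤ 1 := by nlinarith
  rw [div_le_iff₀ (Real.sqrt_pos.2 (by linarith))]
  refine (sq_le_sq₀ hc (by positivity)).1 ?_
  rw [mul_pow, Real.sq_sqrt (by linarith)]
  nlinarith

/-- (Guarantee for Spherical PCA initialization.) Let `0 < γ < π/4`, let the
dataset consist of nonzero inliers in the `d`-subspace `L*` and nonzero outliers, let `X̃_in`,
`X̃_out` be the matrices of unit-normalized inliers/outliers, and suppose
`(sin γ/√2)·λ_d(X̃_in X̃_inᵀ) − ‖X̃_out‖₂² > 0`. If `L_SPCA` is the span of `d` orthonormal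
eigenvectors of `A = X̃_in X̃_inᵀ + X̃_out X̃_outᵀ` corresponding to its `d` largest
eigenvalues, then `‖P_{L_SPCA} − P_{L*}‖₂ ≤ sin γ`, i.e. the largest principal angle between
`L_SPCA` and `L*` is at most `γ`. -/
theorem stmt_11 (D d Nin Nout : ℕ) (hd : 1 ≤ d) (hdD : d ≤ D)
    (γ : ℝ)
    (Lstar : Submodule ℝ (EuclideanSpace ℝ (Fin D)))
    (hLstar : finrank ℝ Lstar = d)
    (a : Fin Nin → EuclideanSpace ℝ (Fin D)) (haL : ∀ i, a i ∈ Lstar)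
    (Xin : Matrix (Fin D) (Fin Nin) ℝ) (hXin : Xin = Matrix.of fun i j => a j i / ‖a j‖)
    (Xout : Matrix (Fin D) (Fin Nout) ℝ)
    -- an antitone listing `ν` of the eigenvalues of `X̃_in X̃_inᵀ`, so `λ_d = ν (d-1)`
    (ν : Fin D → ℝ) (hν : Antitone ν)
    (cc : OrthonormalBasis (Fin D) ℝ (EuclideanSpace ℝ (Fin D)))
    (heigIn : ∀ i, Matrix.toEuclideanLin (Xin * Xin.transpose) (cc i) = ν i • cc i)
    (hstab : 0 < Real.sin γ / Real.sqrt 2 * ν ⟨d - 1, by omega⟩ - specNorm Xout ^ 2)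
    -- an antitone listing `μ` of the eigenvalues of `A`, with orthonormal eigenbasis `bb`
    (μ : Fin D → ℝ) (hμ : Antitone μ)
    (bb : OrthonormalBasis (Fin D) ℝ (EuclideanSpace ℝ (Fin D)))
    (heigA : ∀ i, Matrix.toEuclideanLin (Xin * Xin.transpose + Xout * Xout.transpose) (bb i)
      = μ i • bb i)
    -- `L_SPCA`: the span of the `d` orthonormal eigenvectors of `A` corresponding to its
    -- `d` largest eigenvalues
    (Lspca : Submodule ℝ (EuclideanSpace ℝ (Fin D)))
    (hLspca : Lspca = Submodule.span ℝ (Set.range fun j : Fin d => bb (Fin.castLE hdD j))) :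
    ‖projCLM Lspca - projCLM Lstar‖ ≤ Real.sin γ := by
  set ρ := ν ⟨d - 1, by omega⟩
  set c := specNorm Xout ^ 2 / ρ
  have hSL : ∀ x, Matrix.toEuclideanLin (Xin * Xinᵀ) x ∈ Lstar := by
    intro x
    rw [Matrix.toEuclideanLin_mul_transpose]
    refine Matrix.toEuclideanLin_apply_mem (fun j => ?_) _
    have : WithLp.toLp 2 (Xinᵀ j) = ‖a j‖⁻¹ • a j := by
      ext i; simp [hXin, div_eq_inv_mul]
    exact this ▸ smul_mem _ _ (haL j)
  have hρ_nonneg : 0 ≤ ρ := by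
    have := Matrix.inner_toEuclideanLin_mul_transpose_self_nonneg Xin (cc ⟨d - 1, by omega⟩)
    rwa [heigIn, real_inner_smul_right, real_inner_self_eq_norm_sq, cc.orthonormal.1,
      one_pow, mul_one] at this
  have hρ : 0 < ρ := hρ_nonneg.lt_of_ne' <| right_ne_zero_of_mul <| ne_of_gt <|
    show 0 < Real.sin γ / √2 * ρ by linarith [sq_nonneg (specNorm Xout)]
  have hA : ∀ z ∈ Lstar,
      ρ * ‖z‖ ^ 2 ≤ ⟪z, Matrix.toEuclideanLin (Xin * Xinᵀ + Xout * Xoutᵀ) z⟫ := by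
    intro z hz
    rw [map_add, LinearMap.add_apply, inner_add_right]
    linarith [cc.le_inner_map_self_of_mem heigIn hν hSL (i := ⟨d - 1, by omega⟩)
      (by rw [hLstar]; exact Nat.sub_add_cancel hd) hρ hz,
      Matrix.inner_toEuclideanLin_mul_transpose_self_nonneg Xout z]
  have hclose : ∀ v ∈ Lspca, ‖v - Lstar.starProjection v‖ ≤ c * ‖v‖ := by
    intro v hv
    refine bb.norm_sub_starProjection_le heigA (map_add _ _ _) hSL (sq_nonneg _)
      (Matrix.norm_toEuclideanLin_mul_transpose_apply_le Xout) hρ fun i hi => ?_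
    refine bb.le_of_forall_le_inner_map_self heigA hμ hA (hLstar ▸ ?_)
    by_contra! hdi
    exact hi (bb.inner_eq_zero_of_mem_span_castLE hdD (hLspca ▸ hv) hdi)
  have hc : c < Real.sin γ / √2 := by rw [div_lt_iff₀ hρ]; linarith
  have hc0 : 0 ≤ c := by positivity
  have hc1 : c < 1 := hc.trans_le <| div_le_one_of_le₀
    ((Real.sin_le_one γ).trans Real.one_lt_sqrt_two.le) (Real.sqrt_nonneg 2)
  calc ‖projCLM Lspca - projCLM Lstar‖ ≤ c / √(1 - c ^ 2) :=
        norm_starProjection_sub_le (by rw [hLspca, bb.finrank_span_castLE, hLstar]) hc0 hc1 hclose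
    _ ≤ Real.sin γ := div_sqrt_one_sub_sq_le hc0 hc (Real.sin_le_one γ)
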